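/- arXiv:0810.0650 — 2 statements merged into one kernel-verified Lean document; each statement's English description precedes it below -/
import Mathlib

section
/- Let $(U_1,\dots,U_n)$ have the Dirichlet (order-statistics) law on $[0,t]$, i.e., density $\frac{n!}{t^n}\mathbf{1}_{\{0<x_1<\cdots<x_n<t\}}$. Define $R_n=2\sum_{i=1}^n(-1)^{i+1}U_i$. Then for $n=2k$ ($k\ge1$), $R_{2k}+t$ has density $\frac{(2k-1)!}{2^{2k-1}((k-1)!)^2}\frac{(t+x)^k(t-x)^{k-1}}{t^{2k}}\mathbf{1}_{[-t,t]}(x)$, and for $n=2k+1$ ($k\ge0$), $R_{2k+1}-t$ has density $\frac{(2k+1)!}{2^{2k+1}(k!)^2}\frac{(t+x)^k(t-x)^k}{t^{2k+1}}\mathbf{1}_{[-t,t]}(x)$. -/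
open MeasureTheory ProbabilityTheory Real Set

noncomputable section

/-- The Dirichlet (uniform order statistics) law on `[0, t]`: the law with density
`n!/tⁿ · 1_{0 < x₁ < ⋯ < xₙ < t}` with respect to Lebesgue measure on `Fin n → ℝ`. -/
def dirichletLaw (n : ℕ) (t : ℝ) : Measure (Fin n → ℝ) :=
  (volume : Measure (Fin n → ℝ)).withDensity fun x =>
    ENNReal.ofReal (if StrictMono x ∧ ∀ i, x i ∈ Set.Ioo 0 t then (n.factorial : ℝ) / t ^ n else 0)

/-- The alternating sum `Rₙ = 2∑_{i=1}^n (-1)^{i+1} Uᵢ` (for a `Fin n`-indexed family,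
the sign of the `i`-th coordinate, `0`-based, is `(-1)^i`). -/
def altSum {Ω : Type*} (n : ℕ) (U : Ω → Fin n → ℝ) (ω : Ω) : ℝ :=
  2 * ∑ i : Fin n, (-1 : ℝ) ^ (i : ℕ) * U ω i

/-!
For `0 < x₀ < ⋯ < x_{m-1} < s`, the alternating sum `∑ (-1)ⁱ xᵢ`, shifted by `s` when `m` is even,
is the total length `W` of the gaps of even index in the subdivision `0 < x₀ < ⋯ < x_{m-1} < s`.
Removing the first point `u` leaves `m - 1` ordered points in an interval of length `s - u`, whose
even gaps are the odd gaps of the original configuration, so `W = s - W'`. Integrating out `u`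
then shows by induction on `m` that, under Lebesgue measure on ordered configurations, `W` has
density `y ^ a (s - y) ^ b / (a! b!)` on `(0, s)` with `a = ⌊m/2⌋`, `b = ⌊(m-1)/2⌋`.
In both parities the variable of the theorem is `2W - t`.
-/

open scoped ENNReal Nat

namespace OrderedSample

def orderedSimplex (m : ℕ) (s : ℝ) : Set (Fin m → ℝ) :=
  {x | StrictMono x ∧ ∀ i, x i ∈ Ioo 0 s}

def alternatingSum {m : ℕ} (x : Fin m → ℝ) : ℝ :=
  ∑ i : Fin m, (-1 : ℝ) ^ (i : ℕ) * x i

/-- The total length of the even-indexed gaps `x₀, x₂ - x₁, …` of `0 < x₀ < ⋯ < x_{m-1} < s`;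
the last gap `s - x_{m-1}` has index `m`. -/
def evenGapSum {m : ℕ} (s : ℝ) (x : Fin m → ℝ) : ℝ :=
  alternatingSum x + if Even m then s else 0

/-- Normalised by `a! b!` so that integrating out one point (`setLIntegral_betaKernel_sub`)
produces no constant. -/
def betaKernel (a b : ℕ) (s : ℝ) : ℝ → ℝ :=
  (Ioo 0 s).indicator fun y => y ^ a * (s - y) ^ b / (a ! * b !)

variable {m : ℕ}

lemma alternatingSum_cons (u : ℝ) (y : Fin m → ℝ) :
    alternatingSum (Fin.cons u y : Fin (m + 1) → ℝ) = u - alternatingSum y := by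
  simp only [alternatingSum, Fin.sum_univ_succ, Fin.cons_zero, Fin.cons_succ, Fin.val_succ,
    Fin.val_zero, pow_succ, pow_zero, one_mul, mul_neg_one, neg_mul, Finset.sum_neg_distrib,
    sub_eq_add_neg]

lemma alternatingSum_add_const (z : Fin m → ℝ) (u : ℝ) :
    alternatingSum (z + fun _ => u) = alternatingSum z + if Even m then 0 else u := by
  simp only [alternatingSum, Pi.add_apply, mul_add, Finset.sum_add_distrib, ← Finset.sum_mul,
    Fin.sum_univ_eq_sum_range (fun i => (-1 : ℝ) ^ i), neg_one_geom_sum]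
  split_ifs <;> simp

lemma evenGapSum_cons_add_const (s u : ℝ) (z : Fin m → ℝ) :
    evenGapSum s (Fin.cons u (z + fun _ => u) : Fin (m + 1) → ℝ) = s - evenGapSum (s - u) z := by
  simp only [evenGapSum, alternatingSum_cons, alternatingSum_add_const, Nat.even_add_one]
  by_cases hm : Even m <;> simp [hm] <;> ring

lemma measurable_alternatingSum : Measurable (alternatingSum : (Fin m → ℝ) → ℝ) :=
  Finset.measurable_sum _ fun i _ => (measurable_pi_apply i).const_mul _

lemma measurable_evenGapSum (s : ℝ) : Measurable (evenGapSum s : (Fin m → ℝ) → ℝ) :=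
  measurable_alternatingSum.add_const _

lemma measurableSet_orderedSimplex (s : ℝ) : MeasurableSet (orderedSimplex m s) := by
  have : orderedSimplex m s =
      (⋂ (i : Fin m) (j : Fin m) (_ : i < j), {x | x i < x j}) ∩
        ⋂ i, (fun x => x i) ⁻¹' Ioo 0 s := by
    ext x
    simp [orderedSimplex, StrictMono]
  rw [this]
  exact .inter (.iInter fun i => .iInter fun j => .iInter fun _ =>
      measurableSet_lt (measurable_pi_apply i) (measurable_pi_apply j))
    (.iInter fun i => measurable_pi_apply i measurableSet_Ioo)

lemma cons_add_const_mem_orderedSimplex_iff {s u : ℝ} {z : Fin m → ℝ} :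
    (Fin.cons u (z + fun _ => u) : Fin (m + 1) → ℝ) ∈ orderedSimplex (m + 1) s ↔
      u ∈ Ioo 0 s ∧ z ∈ orderedSimplex m (s - u) := by
  simp only [orderedSimplex, mem_ofPred_eq, Fin.strictMono_cons, Fin.forall_fin_succ,
    Fin.cons_zero, Fin.cons_succ, Pi.add_apply, mem_Ioo]
  have hmono : StrictMono (z + fun _ => u) ↔ StrictMono z := by
    simp [StrictMono]
  rw [hmono]
  constructor
  · rintro ⟨⟨hpos, hmono⟩, hu, hz⟩
    exact ⟨hu, hmono, fun i => ⟨by linarith [hpos i], by linarith [(hz i).2]⟩⟩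
  · rintro ⟨hu, hmono, hz⟩
    exact ⟨⟨fun i => by linarith [(hz i).1], hmono⟩, hu,
      fun i => ⟨by linarith [(hz i).1, hu.1], by linarith [(hz i).2]⟩⟩

lemma measurable_betaKernel_uncurry (a b : ℕ) :
    Measurable fun p : ℝ × ℝ => betaKernel a b p.1 p.2 := by
  simp only [betaKernel, indicator_apply, mem_Ioo]
  exact Measurable.ite ((measurableSet_lt measurable_const measurable_snd).inter
    (measurableSet_lt measurable_snd measurable_fst)) (by fun_prop) measurable_const

lemma measurable_betaKernel (a b : ℕ) (s : ℝ) : Measurable (betaKernel a b s) :=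
  (measurable_betaKernel_uncurry a b).comp (measurable_const.prodMk measurable_id)

lemma betaKernel_nonneg (a b : ℕ) (s y : ℝ) : 0 ≤ betaKernel a b s y := by
  unfold betaKernel
  exact indicator_nonneg (fun y hy => div_nonneg
    (mul_nonneg (pow_nonneg hy.1.le _) (pow_nonneg (sub_nonneg.2 hy.2.le) _)) (by positivity)) y

lemma lintegral_fin_cons {g : (Fin (m + 1) → ℝ) → ℝ≥0∞} (hg : Measurable g) :
    ∫⁻ x, g x = ∫⁻ u, ∫⁻ y : Fin m → ℝ, g (Fin.cons u y) := by
  rw [← (volume_preserving_piFinSuccAbove (fun _ : Fin (m + 1) => ℝ) 0).symm.lintegral_comp hg,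
    Measure.volume_eq_prod,
    lintegral_prod _ (by exact (hg.comp (MeasurableEquiv.measurable _)).aemeasurable)]
  simp only [MeasurableEquiv.piFinSuccAbove_symm_apply, Fin.insertNthEquiv_zero]
  rfl

lemma setLIntegral_orderedSimplex_succ (s : ℝ) {g : (Fin (m + 1) → ℝ) → ℝ≥0∞} (hg : Measurable g) :
    ∫⁻ x in orderedSimplex (m + 1) s, g x =
      ∫⁻ u in Ioo 0 s, ∫⁻ z in orderedSimplex m (s - u), g (Fin.cons u (z + fun _ => u)) := by
  rw [← lintegral_indicator (measurableSet_orderedSimplex s),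
    lintegral_fin_cons (hg.indicator (measurableSet_orderedSimplex s)),
    ← lintegral_indicator measurableSet_Ioo]
  refine lintegral_congr fun u => ?_
  rw [← lintegral_add_right_eq_self _ (fun _ => u : Fin m → ℝ)]
  by_cases hu : u ∈ Ioo 0 s
  · rw [indicator_of_mem hu, ← lintegral_indicator (measurableSet_orderedSimplex _)]
    refine lintegral_congr fun z => ?_
    by_cases hz : z ∈ orderedSimplex m (s - u)
    · rw [indicator_of_mem hz, indicator_of_mem (cons_add_const_mem_orderedSimplex_iff.2 ⟨hu, hz⟩)]
    · rw [indicator_of_notMem hz,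
        indicator_of_notMem fun h => hz (cons_add_const_mem_orderedSimplex_iff.1 h).2]
  · rw [indicator_of_notMem hu]
    exact (lintegral_congr fun z => indicator_of_notMem
      (fun h => hu (cons_add_const_mem_orderedSimplex_iff.1 h).1) _).trans lintegral_zero

lemma setLIntegral_orderedSimplex_comp_evenGapSum_succ (s : ℝ) {f : ℝ → ℝ≥0∞} (hf : Measurable f) :
    ∫⁻ x in orderedSimplex (m + 1) s, f (evenGapSum s x) =
      ∫⁻ u in Ioo 0 s, ∫⁻ z in orderedSimplex m (s - u), f (s - evenGapSum (s - u) z) := by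
  rw [setLIntegral_orderedSimplex_succ s (g := fun x => f (evenGapSum s x))
    (hf.comp (measurable_evenGapSum s))]
  simp only [evenGapSum_cons_add_const]

lemma setLIntegral_Ioo_sub_pow (b : ℕ) {y : ℝ} (hy : 0 ≤ y) :
    ∫⁻ u in Ioo 0 y, ENNReal.ofReal ((y - u) ^ b) = ENNReal.ofReal (y ^ (b + 1) / (b + 1)) := by
  rw [← ofReal_integral_eq_lintegral_ofReal, ← integral_Ioc_eq_integral_Ioo,
    ← intervalIntegral.integral_of_le hy, intervalIntegral.integral_comp_sub_left (· ^ b),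
    integral_pow]
  · simp
  · exact (by fun_prop : Continuous fun u : ℝ => (y - u) ^ b).integrableOn_Icc.mono_set
      Ioo_subset_Icc_self
  · exact (ae_restrict_iff' measurableSet_Ioo).2 (ae_of_all _ fun u hu =>
      pow_nonneg (sub_nonneg.2 hu.2.le) b)

lemma setLIntegral_betaKernel_sub (a b : ℕ) (s y : ℝ) :
    ∫⁻ u in Ioo 0 s, ENNReal.ofReal (betaKernel a b (s - u) (s - y)) =
      ENNReal.ofReal (betaKernel (b + 1) a s y) := by
  by_cases hy : y ∈ Ioo 0 s
  · have hslice : EqOn (fun u => ENNReal.ofReal (betaKernel a b (s - u) (s - y)))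
        ((Ioo 0 y).indicator fun u =>
          ENNReal.ofReal ((s - y) ^ a / (a ! * b !)) * ENNReal.ofReal ((y - u) ^ b)) (Ioo 0 s) := by
      intro u hu
      dsimp only
      by_cases huy : u < y
      · rw [indicator_of_mem (show u ∈ Ioo 0 y from ⟨hu.1, huy⟩), betaKernel,
          indicator_of_mem (show s - y ∈ Ioo 0 (s - u) from ⟨by linarith [hy.2], by linarith⟩),
          ← ENNReal.ofReal_mul (div_nonneg (pow_nonneg (by linarith [hy.2]) _) (by positivity))]
        ring_nf
      · rw [indicator_of_notMem (show u ∉ Ioo 0 y from fun h => huy h.2), betaKernel,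
          indicator_of_notMem (show s - y ∉ Ioo 0 (s - u) from fun h => huy (by linarith [h.2])),
          ENNReal.ofReal_zero]
    rw [setLIntegral_congr_fun measurableSet_Ioo hslice, lintegral_indicator measurableSet_Ioo,
      Measure.restrict_restrict measurableSet_Ioo,
      inter_eq_left.2 (Ioo_subset_Ioo_right hy.2.le),
      lintegral_const_mul' _ _ ENNReal.ofReal_ne_top,
      setLIntegral_Ioo_sub_pow b hy.1.le,
      ← ENNReal.ofReal_mul (div_nonneg (pow_nonneg (by linarith [hy.2]) _) (by positivity)),
      betaKernel, indicator_of_mem hy, Nat.factorial_succ]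
    push_cast
    field_simp
  · rw [betaKernel, indicator_of_notMem hy, ENNReal.ofReal_zero]
    refine (setLIntegral_congr_fun measurableSet_Ioo fun u hu => ?_).trans lintegral_zero
    rw [betaKernel, indicator_of_notMem, ENNReal.ofReal_zero]
    exact fun h => hy ⟨by linarith [hu.1, h.2], by linarith [h.1]⟩

theorem setLIntegral_orderedSimplex_comp_evenGapSum (m : ℕ) (s : ℝ) {f : ℝ → ℝ≥0∞}
    (hf : Measurable f) :
    ∫⁻ x in orderedSimplex (m + 1) s, f (evenGapSum s x) =
      ∫⁻ y, ENNReal.ofReal (betaKernel ((m + 1) / 2) (m / 2) s y) * f y := by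
  induction m generalizing s f with
  | zero =>
    have hpoint : ∀ u, ∫⁻ z in orderedSimplex 0 (s - u), f (s - evenGapSum (s - u) z) = f u := by
      intro u
      simp [orderedSimplex, evenGapSum, alternatingSum, StrictMono, volume_pi]
    rw [setLIntegral_orderedSimplex_comp_evenGapSum_succ s hf]
    simp only [hpoint]
    rw [← lintegral_indicator measurableSet_Ioo]
    refine lintegral_congr fun y => ?_
    by_cases hy : y ∈ Ioo 0 s
    · simp [betaKernel, indicator_of_mem hy]
    · simp [betaKernel, indicator_of_notMem hy]
  | succ m ih =>
    have hker : Measurable fun p : ℝ × ℝ =>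
        ENNReal.ofReal (betaKernel ((m + 1) / 2) (m / 2) (s - p.1) (s - p.2)) :=
      ENNReal.measurable_ofReal.comp ((measurable_betaKernel_uncurry _ _).comp
        ((measurable_const.sub measurable_fst).prodMk (measurable_const.sub measurable_snd)))
    calc ∫⁻ x in orderedSimplex (m + 2) s, f (evenGapSum s x)
        = ∫⁻ u in Ioo 0 s, ∫⁻ v, ENNReal.ofReal (betaKernel ((m + 1) / 2) (m / 2) (s - u) v) *
            f (s - v) := by
          rw [setLIntegral_orderedSimplex_comp_evenGapSum_succ s hf]
          exact lintegral_congr fun u => ih (s - u) (hf.comp (measurable_const.sub measurable_id))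
      _ = ∫⁻ u in Ioo 0 s, ∫⁻ y, ENNReal.ofReal
            (betaKernel ((m + 1) / 2) (m / 2) (s - u) (s - y)) * f y := by
          refine lintegral_congr fun u => ?_
          rw [← lintegral_sub_left_eq_self _ s]
          simp only [sub_sub_cancel]
      _ = ∫⁻ y, (∫⁻ u in Ioo 0 s, ENNReal.ofReal
            (betaKernel ((m + 1) / 2) (m / 2) (s - u) (s - y))) * f y := by
          rw [lintegral_lintegral_swap (hker.mul (hf.comp measurable_snd)).aemeasurable]
          exact lintegral_congr fun y =>
            lintegral_mul_const _ (hker.comp (measurable_id.prodMk measurable_const))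
      _ = ∫⁻ y, ENNReal.ofReal (betaKernel ((m + 2) / 2) ((m + 1) / 2) s y) * f y := by
          simp only [setLIntegral_betaKernel_sub]
          rw [show (m + 2) / 2 = m / 2 + 1 by omega]

theorem map_evenGapSum_restrict_orderedSimplex (m : ℕ) (s : ℝ) :
    (volume.restrict (orderedSimplex (m + 1) s)).map (evenGapSum s) =
      volume.withDensity fun y => ENNReal.ofReal (betaKernel ((m + 1) / 2) (m / 2) s y) := by
  refine Measure.ext_of_lintegral _ fun f hf => ?_
  rw [lintegral_map hf (measurable_evenGapSum s),
    lintegral_withDensity_eq_lintegral_mul _ (measurable_betaKernel _ _ _).ennreal_ofReal hf]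
  exact setLIntegral_orderedSimplex_comp_evenGapSum m s hf

lemma lintegral_comp_mul_sub (g : ℝ → ℝ≥0∞) {a : ℝ} (ha : a ≠ 0) (b : ℝ) :
    ∫⁻ y, g (a * y - b) = ENNReal.ofReal |a⁻¹| * ∫⁻ x, g x := by
  calc ∫⁻ y, g (a * y - b)
      = ∫⁻ x, g (x - b) ∂(volume.map (MeasurableEquiv.mulLeft₀ a ha)) :=
        (lintegral_map_equiv (fun x => g (x - b)) (MeasurableEquiv.mulLeft₀ a ha)).symm
    _ = ENNReal.ofReal |a⁻¹| * ∫⁻ x, g x := by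
        rw [MeasurableEquiv.coe_mulLeft₀, Real.map_volume_mul_left ha, lintegral_smul_measure,
          lintegral_sub_right_eq_self, smul_eq_mul]

lemma map_withDensity_mul_sub {g : ℝ → ℝ≥0∞} (hg : Measurable g) {a : ℝ} (ha : a ≠ 0) (b : ℝ) :
    (volume.withDensity g).map (fun y => a * y - b) =
      volume.withDensity fun x => ENNReal.ofReal |a⁻¹| * g ((x + b) / a) := by
  refine Measure.ext_of_lintegral _ fun f hf => ?_
  rw [lintegral_map hf (by fun_prop), lintegral_withDensity_eq_lintegral_mul _ hg (by fun_prop),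
    lintegral_withDensity_eq_lintegral_mul _ (by fun_prop) hf]
  have hsub : ∀ y, (g * fun y => f (a * y - b)) y =
      (fun x => g ((x + b) / a) * f x) (a * y - b) := fun y => by
    simp only [Pi.mul_apply, sub_add_cancel, mul_div_cancel_left₀ y ha]
  rw [lintegral_congr hsub, lintegral_comp_mul_sub (fun x => g ((x + b) / a) * f x) ha,
    ← lintegral_const_mul' _ _ ENNReal.ofReal_ne_top]
  simp only [Pi.mul_apply, mul_assoc]

lemma dirichletLaw_eq_smul_restrict (n : ℕ) (t : ℝ) :
    dirichletLaw n t = ENNReal.ofReal (n ! / t ^ n) • volume.restrict (orderedSimplex n t) := by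
  have hdens : (fun x : Fin n → ℝ => ENNReal.ofReal
      (if StrictMono x ∧ ∀ i, x i ∈ Ioo 0 t then (n ! : ℝ) / t ^ n else 0)) =
      (orderedSimplex n t).indicator fun _ => ENNReal.ofReal (n ! / t ^ n) := by
    funext x
    by_cases hx : StrictMono x ∧ ∀ i, x i ∈ Ioo 0 t
    · rw [indicator_of_mem (show x ∈ orderedSimplex n t from hx), if_pos hx]
    · rw [indicator_of_notMem (show x ∉ orderedSimplex n t from hx), if_neg hx,
        ENNReal.ofReal_zero]
  rw [dirichletLaw, hdens, withDensity_indicator (measurableSet_orderedSimplex t),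
    withDensity_const]

lemma factorial_div_pow_mul_betaKernel (m : ℕ) (t x : ℝ) :
    (m + 1)! / t ^ (m + 1) * (|2⁻¹| * betaKernel ((m + 1) / 2) (m / 2) t ((x + t) / 2)) =
      (Ioo (-t) t).indicator (fun x => ((m + 1)! : ℝ) / (2 ^ (m + 1) * ((m + 1) / 2)! * (m / 2)!) *
        ((t + x) ^ ((m + 1) / 2) * (t - x) ^ (m / 2) / t ^ (m + 1))) x := by
  by_cases hx : x ∈ Ioo (-t) t
  · rw [betaKernel, indicator_of_mem hx,
      indicator_of_mem (show (x + t) / 2 ∈ Ioo 0 t from ⟨by linarith [hx.1], by linarith [hx.2]⟩),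
      show t - (x + t) / 2 = (t - x) / 2 by ring, add_comm x t, div_pow, div_pow,
      show (2 : ℝ) ^ (m + 1) = 2 ^ ((m + 1) / 2) * 2 ^ (m / 2) * 2 by
        rw [← pow_add, ← pow_succ]; congr 1; omega]
    rw [abs_of_pos (by norm_num)]
    field_simp
  · rw [betaKernel, indicator_of_notMem hx, indicator_of_notMem
      (show (x + t) / 2 ∉ Ioo 0 t from fun h => hx ⟨by linarith [h.1], by linarith [h.2]⟩),
      mul_zero, mul_zero]

def altSumDensity (n : ℕ) (t : ℝ) : ℝ → ℝ :=
  (Icc (-t) t).indicator fun x => (n ! : ℝ) / (2 ^ n * (n / 2)! * ((n - 1) / 2)!) *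
    ((t + x) ^ (n / 2) * (t - x) ^ ((n - 1) / 2) / t ^ n)

theorem map_dirichletLaw_two_mul_evenGapSum_sub {n : ℕ} (hn : n ≠ 0) (t : ℝ) :
    (dirichletLaw n t).map (fun x => 2 * evenGapSum t x - t) =
      volume.withDensity fun x => ENNReal.ofReal (altSumDensity n t x) := by
  obtain ⟨m, rfl⟩ : ∃ m, n = m + 1 := ⟨n - 1, by omega⟩
  have hw : (fun x : Fin (m + 1) → ℝ => 2 * evenGapSum t x - t) =
      (fun y => 2 * y - t) ∘ evenGapSum t := rfl
  rw [dirichletLaw_eq_smul_restrict, Measure.map_smul, hw,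
    ← Measure.map_map (by fun_prop) (measurable_evenGapSum t),
    map_evenGapSum_restrict_orderedSimplex,
    map_withDensity_mul_sub (measurable_betaKernel _ _ _).ennreal_ofReal two_ne_zero,
    ← withDensity_smul' _ _ ENNReal.ofReal_ne_top]
  refine withDensity_congr_ae ?_
  filter_upwards [(Ioo_ae_eq_Icc : Ioo (-t) t =ᵐ[volume] Icc (-t) t)] with x hx
  rw [Pi.smul_apply, smul_eq_mul, ← ENNReal.ofReal_mul (abs_nonneg _),
    ← ENNReal.ofReal_mul' (mul_nonneg (abs_nonneg _) (betaKernel_nonneg _ _ _ _)),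
    factorial_div_pow_mul_betaKernel]
  simp only [altSumDensity, Nat.add_sub_cancel, indicator_apply,
    show (x ∈ Ioo (-t) t) = (x ∈ Icc (-t) t) from hx]

theorem map_two_mul_evenGapSum_sub_of_map_eq {Ω : Type*} [MeasurableSpace Ω] {μ : Measure Ω}
    {n : ℕ} (hn : n ≠ 0) {t : ℝ} {U : Ω → Fin n → ℝ} (hU : Measurable U)
    (hlaw : μ.map U = dirichletLaw n t) :
    μ.map (fun ω => 2 * evenGapSum t (U ω) - t) =
      volume.withDensity fun x => ENNReal.ofReal (altSumDensity n t x) := by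
  rw [← map_dirichletLaw_two_mul_evenGapSum_sub hn, ← hlaw,
    Measure.map_map (((measurable_evenGapSum t).const_mul 2).sub_const t) hU]
  rfl

lemma altSum_add_of_even {Ω : Type*} {n : ℕ} (hn : Even n) (U : Ω → Fin n → ℝ) (t : ℝ) (ω : Ω) :
    altSum n U ω + t = 2 * evenGapSum t (U ω) - t := by
  simp only [altSum, evenGapSum, alternatingSum, if_pos hn]
  ring

lemma altSum_sub_of_not_even {Ω : Type*} {n : ℕ} (hn : ¬Even n) (U : Ω → Fin n → ℝ) (t : ℝ)
    (ω : Ω) : altSum n U ω - t = 2 * evenGapSum t (U ω) - t := by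
  simp only [altSum, evenGapSum, alternatingSum, if_neg hn]
  ring

lemma factorial_two_mul_add_two_div (j : ℕ) :
    ((2 * j + 2)! : ℝ) / (2 ^ (2 * j + 2) * (j + 1)! * j !) =
      (2 * j + 1)! / (2 ^ (2 * j + 1) * (j ! : ℝ) ^ 2) := by
  rw [Nat.factorial_succ (2 * j + 1), Nat.factorial_succ j]
  push_cast
  field_simp
  ring

end OrderedSample

theorem stmt_18_general {Ω : Type*} [MeasureSpace Ω]
    (t : ℝ) :
    (∀ k : ℕ, 1 ≤ k → ∀ U : Ω → Fin (2 * k) → ℝ, Measurable U →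
      Measure.map U ℙ = dirichletLaw (2 * k) t →
      Measure.map (fun ω => altSum (2 * k) U ω + t) ℙ =
        (volume : Measure ℝ).withDensity fun x =>
          ENNReal.ofReal (if x ∈ Set.Icc (-t) t then
            ((2 * k - 1).factorial : ℝ) / (2 ^ (2 * k - 1) * ((k - 1).factorial : ℝ) ^ 2) *
              ((t + x) ^ k * (t - x) ^ (k - 1) / t ^ (2 * k)) else 0)) ∧
    (∀ k : ℕ, ∀ U : Ω → Fin (2 * k + 1) → ℝ, Measurable U →
      Measure.map U ℙ = dirichletLaw (2 * k + 1) t →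
      Measure.map (fun ω => altSum (2 * k + 1) U ω - t) ℙ =
        (volume : Measure ℝ).withDensity fun x =>
          ENNReal.ofReal (if x ∈ Set.Icc (-t) t then
            ((2 * k + 1).factorial : ℝ) / (2 ^ (2 * k + 1) * (k.factorial : ℝ) ^ 2) *
              ((t + x) ^ k * (t - x) ^ k / t ^ (2 * k + 1)) else 0)) := by
  constructor
  · intro k hk U hU hlaw
    obtain ⟨j, rfl⟩ : ∃ j, k = j + 1 := ⟨k - 1, by omega⟩
    rw [funext (OrderedSample.altSum_add_of_even (even_two_mul _) U t),
      OrderedSample.map_two_mul_evenGapSum_sub_of_map_eq (by omega) hU hlaw]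
    congr! 3 with x
    rw [OrderedSample.altSumDensity, show 2 * (j + 1) / 2 = j + 1 by omega,
      show (2 * (j + 1) - 1) / 2 = j by omega, show 2 * (j + 1) - 1 = 2 * j + 1 by omega,
      Nat.add_sub_cancel, indicator_apply,
      show 2 * (j + 1) = 2 * j + 2 by ring, OrderedSample.factorial_two_mul_add_two_div]
  · intro k U hU hlaw
    rw [funext (OrderedSample.altSum_sub_of_not_even (Nat.not_even_two_mul_add_one k) U t),
      OrderedSample.map_two_mul_evenGapSum_sub_of_map_eq (by omega) hU hlaw]
    congr! 3 with x
    rw [OrderedSample.altSumDensity, show (2 * k + 1) / 2 = k by omega, Nat.add_sub_cancel,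
      show 2 * k / 2 = k by omega, indicator_apply, mul_assoc, ← sq]

theorem stmt_18 {Ω : Type*} [MeasureSpace Ω] [IsProbabilityMeasure (ℙ : Measure Ω)]
    (t : ℝ) (ht : 0 < t) :
    (∀ k : ℕ, 1 ≤ k → ∀ U : Ω → Fin (2 * k) → ℝ, Measurable U →
      Measure.map U ℙ = dirichletLaw (2 * k) t →
      Measure.map (fun ω => altSum (2 * k) U ω + t) ℙ =
        (volume : Measure ℝ).withDensity fun x =>
          ENNReal.ofReal (if x ∈ Set.Icc (-t) t then
            ((2 * k - 1).factorial : ℝ) / (2 ^ (2 * k - 1) * ((k - 1).factorial : ℝ) ^ 2) *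
              ((t + x) ^ k * (t - x) ^ (k - 1) / t ^ (2 * k)) else 0)) ∧
    (∀ k : ℕ, ∀ U : Ω → Fin (2 * k + 1) → ℝ, Measurable U →
      Measure.map U ℙ = dirichletLaw (2 * k + 1) t →
      Measure.map (fun ω => altSum (2 * k + 1) U ω - t) ℙ =
        (volume : Measure ℝ).withDensity fun x =>
          ENNReal.ofReal (if x ∈ Set.Icc (-t) t then
            ((2 * k + 1).factorial : ℝ) / (2 ^ (2 * k + 1) * (k.factorial : ℝ) ^ 2) *
              ((t + x) ^ k * (t - x) ^ k / t ^ (2 * k + 1)) else 0)) :=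
  stmt_18_general t
end
end

section
/- Fix $\alpha_0,\beta_0\in[0,1]$ with $\alpha_0+\beta_0\ne0$, $\rho_0=1-\alpha_0-\beta_0$, $\eta_0=\beta_0-\alpha_0$, $c_0,c_1\in\mathbb{R}$, and real $\mu$. Setting $\lambda=e^{-\mu\Delta}$, $\alpha=\alpha_0+c_0\Delta$, $\beta=\beta_0+c_1\Delta$, the larger root $\theta_+$ of $\theta^2-(\frac{1-\alpha}{\lambda}+(1-\beta)\lambda)\theta+(1-\alpha-\beta)=0$ admits the asymptotic expansion $\theta_+=1+\Delta\frac{\mu\eta_0}{1-\rho_0}+\Delta^2\Big[\frac{\mu^2}{2}\Big(\frac{1+\rho_0}{1-\rho_0}-\frac{2\eta_0^2\rho_0}{(1-\rho_0)^3}\Big)+\mu\Big(\frac{c_1-c_0}{1-\rho_0}-\frac{\eta_0(c_0+c_1)}{(1-\rho_0)^2}\Big)\Big]+o(\Delta^2)$ as $\Delta\to0^+$. -/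
open Real Filter Asymptotics Topology

/-! With `S = (1 - α) / λ + (1 - β) λ` one has `θ₊ = (S + √(S² - 4 (1 - α - β))) / 2`.
At `Δ = 0` the discriminant equals `(2 - α₀ - β₀)² - 4 (1 - α₀ - β₀) = (α₀ + β₀)² > 0`, so the
square root is smooth there. Second-order expansions at `0` pass through sums, products and
square roots of functions with positive limit, and `S` is a sum of products of affine functions
with `exp (± μ Δ)`; propagating the expansions gives the coefficients, with `1 - ρ₀ = α₀ + β₀`. -/

def HasSecondOrderExpansion (f : ℝ → ℝ) (a₀ a₁ a₂ : ℝ) : Prop :=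
  (fun Δ => f Δ - (a₀ + Δ * a₁ + Δ ^ 2 * a₂)) =o[𝓝 0] fun Δ => Δ ^ 2

/-- `√f - g = (f - g²) / (√f + g)`, and the denominator tends to `2 a > 0`. -/
theorem isLittleO_sqrt_sub_of_isLittleO_sub_sq {ι : Type*} {l : Filter ι} {f g h : ι → ℝ}
    {a : ℝ} (ha : 0 < a) (hf : Tendsto f l (𝓝 (a ^ 2))) (hg : Tendsto g l (𝓝 a))
    (hfg : (fun x => f x - g x ^ 2) =o[l] h) :
    (fun x => √(f x) - g x) =o[l] h := by
  have hsqrt : Tendsto (fun x => √(f x)) l (𝓝 a) := by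
    simpa [Real.sqrt_sq ha.le] using hf.sqrt
  have hden : Tendsto (fun x => √(f x) + g x) l (𝓝 (2 * a)) := by
    simpa [two_mul] using hsqrt.add hg
  have hf_pos : ∀ᶠ x in l, 0 < f x := hf.eventually_const_lt (by positivity)
  have hden_pos : ∀ᶠ x in l, 0 < √(f x) + g x := hden.eventually_const_lt (by positivity)
  have hinv : (fun x => (√(f x) + g x)⁻¹) =O[l] fun _ => (1 : ℝ) :=
    (hden.inv₀ (by positivity)).isBigO_one ℝ
  have heq : ∀ᶠ x in l, (f x - g x ^ 2) * (√(f x) + g x)⁻¹ = √(f x) - g x := by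
    filter_upwards [hf_pos, hden_pos] with x hfx hdenx
    rw [mul_inv_eq_iff_eq_mul₀ hdenx.ne']
    linear_combination -Real.sq_sqrt hfx.le
  exact (hfg.mul_isBigO hinv).congr' heq (.of_forall fun _ => mul_one _)

namespace HasSecondOrderExpansion

variable {f g : ℝ → ℝ} {a₀ a₁ a₂ b₀ b₁ b₂ : ℝ}

theorem quadratic (a₀ a₁ a₂ : ℝ) :
    HasSecondOrderExpansion (fun Δ => a₀ + Δ * a₁ + Δ ^ 2 * a₂) a₀ a₁ a₂ := by
  simp only [HasSecondOrderExpansion, sub_self]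
  exact isLittleO_zero _ _

theorem exp_mul (c : ℝ) :
    HasSecondOrderExpansion (fun Δ => exp (c * Δ)) 1 c (c ^ 2 / 2) := by
  have hc : Tendsto (fun Δ : ℝ => c * Δ) (𝓝 0) (𝓝 0) := by
    simpa using (continuous_const_mul c).tendsto 0
  have h := (Real.exp_sub_sum_range_succ_isLittleO_pow 2).comp_tendsto hc
  simp only [Function.comp_def, Finset.sum_range_succ, Finset.sum_range_zero] at h
  have hsq : (fun Δ : ℝ => (c * Δ) ^ 2) =O[𝓝 0] fun Δ => Δ ^ 2 := by
    simpa [mul_pow] using (isBigO_refl (fun Δ : ℝ => Δ ^ 2) _).const_mul_left (c ^ 2)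
  refine (h.trans_isBigO hsq).congr (fun Δ => ?_) fun _ => rfl
  norm_num
  ring

theorem tendsto (hf : HasSecondOrderExpansion f a₀ a₁ a₂) : Tendsto f (𝓝 0) (𝓝 a₀) := by
  have herr := hf.trans_tendsto (by simpa using (continuous_pow 2).tendsto (0 : ℝ))
  have hpoly : Tendsto (fun Δ : ℝ => a₀ + Δ * a₁ + Δ ^ 2 * a₂) (𝓝 0) (𝓝 a₀) := by
    simpa using ((by fun_prop : Continuous fun Δ : ℝ => a₀ + Δ * a₁ + Δ ^ 2 * a₂).tendsto 0)
  simpa using herr.add hpoly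

theorem add (hf : HasSecondOrderExpansion f a₀ a₁ a₂) (hg : HasSecondOrderExpansion g b₀ b₁ b₂) :
    HasSecondOrderExpansion (fun Δ => f Δ + g Δ) (a₀ + b₀) (a₁ + b₁) (a₂ + b₂) :=
  (IsLittleO.add hf hg).congr_left fun _ => by ring

theorem sub (hf : HasSecondOrderExpansion f a₀ a₁ a₂) (hg : HasSecondOrderExpansion g b₀ b₁ b₂) :
    HasSecondOrderExpansion (fun Δ => f Δ - g Δ) (a₀ - b₀) (a₁ - b₁) (a₂ - b₂) :=
  (IsLittleO.sub hf hg).congr_left fun _ => by ring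

theorem const_mul (c : ℝ) (hf : HasSecondOrderExpansion f a₀ a₁ a₂) :
    HasSecondOrderExpansion (fun Δ => c * f Δ) (c * a₀) (c * a₁) (c * a₂) :=
  (hf.const_mul_left c).congr_left fun _ => by ring

theorem mul (hf : HasSecondOrderExpansion f a₀ a₁ a₂) (hg : HasSecondOrderExpansion g b₀ b₁ b₂) :
    HasSecondOrderExpansion (fun Δ => f Δ * g Δ)
      (a₀ * b₀) (a₀ * b₁ + a₁ * b₀) (a₀ * b₂ + a₁ * b₁ + a₂ * b₀) := by
  set P := fun Δ : ℝ => a₀ + Δ * a₁ + Δ ^ 2 * a₂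
  set Q := fun Δ : ℝ => b₀ + Δ * b₁ + Δ ^ 2 * b₂
  have hg_bdd : g =O[𝓝 0] fun _ => (1 : ℝ) := hg.tendsto.isBigO_one ℝ
  have hP_bdd : P =O[𝓝 0] fun _ => (1 : ℝ) := (quadratic a₀ a₁ a₂).tendsto.isBigO_one ℝ
  have hcoeff_bdd : (fun Δ : ℝ => a₁ * b₂ + a₂ * b₁ + Δ * (a₂ * b₂)) =O[𝓝 0]
      fun _ => (1 : ℝ) :=
    (Continuous.tendsto (by fun_prop) 0).isBigO_one ℝ
  have hfg₁ : (fun Δ => (f Δ - P Δ) * g Δ) =o[𝓝 0] fun Δ => Δ ^ 2 :=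
    (hf.mul_isBigO hg_bdd).congr_right fun _ => mul_one _
  have hfg₂ : (fun Δ => P Δ * (g Δ - Q Δ)) =o[𝓝 0] fun Δ => Δ ^ 2 :=
    (hP_bdd.mul_isLittleO hg).congr_right fun _ => one_mul _
  have htrunc : (fun Δ : ℝ => Δ ^ 3 * (a₁ * b₂ + a₂ * b₁ + Δ * (a₂ * b₂))) =o[𝓝 0]
      fun Δ => Δ ^ 2 :=
    ((isLittleO_pow_pow (by norm_num : 2 < 3)).mul_isBigO hcoeff_bdd).congr_right
      fun _ => mul_one _
  refine ((hfg₁.add hfg₂).add htrunc).congr_left fun Δ => ?_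
  simp only [P, Q]
  ring

theorem sqrt {q₀ : ℝ} (hf : HasSecondOrderExpansion f a₀ a₁ a₂) (hq₀ : 0 < q₀)
    (ha₀ : a₀ = q₀ ^ 2) :
    HasSecondOrderExpansion (fun Δ => √(f Δ))
      q₀ (a₁ / (2 * q₀)) ((a₂ - (a₁ / (2 * q₀)) ^ 2) / (2 * q₀)) := by
  set Q := fun Δ : ℝ => q₀ + Δ * (a₁ / (2 * q₀)) + Δ ^ 2 * ((a₂ - (a₁ / (2 * q₀)) ^ 2) / (2 * q₀))
  have hQ : HasSecondOrderExpansion Q _ _ _ := quadratic _ _ _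
  -- The coefficients of `Q` are chosen so that `Q²` has the same expansion as `f`.
  have hf_sub : HasSecondOrderExpansion (fun Δ => f Δ - Q Δ * Q Δ) 0 0 0 := by
    convert hf.sub (hQ.mul hQ) using 1
    · rw [ha₀]; ring
    all_goals field_simp; ring
  have hsq : (fun Δ => f Δ - Q Δ ^ 2) =o[𝓝 0] fun Δ => Δ ^ 2 := by
    simpa [HasSecondOrderExpansion, sq] using hf_sub
  exact isLittleO_sqrt_sub_of_isLittleO_sub_sq hq₀ (ha₀ ▸ hf.tendsto) hQ.tendsto hsq

end HasSecondOrderExpansion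

theorem stmt_19_general (α₀ β₀ : ℝ) (hα₀ : 0 ≤ α₀) (hβ₀ : 0 ≤ β₀)
    (hne : α₀ + β₀ ≠ 0)
    (ρ₀ η₀ : ℝ) (hρ₀ : ρ₀ = 1 - α₀ - β₀) (hη₀ : η₀ = β₀ - α₀)
    (c₀ c₁ μ : ℝ)
    (lam α β : ℝ → ℝ)
    (hlam : ∀ Δ, lam Δ = Real.exp (-μ * Δ))
    (hα : ∀ Δ, α Δ = α₀ + c₀ * Δ) (hβ : ∀ Δ, β Δ = β₀ + c₁ * Δ)
    (D : ℝ → ℝ)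
    (hD : ∀ Δ, D Δ = ((1 - α Δ) / lam Δ + (1 - β Δ) * lam Δ) ^ 2 - 4 * (1 - α Δ - β Δ))
    (θp : ℝ → ℝ)
    (hθp : ∀ Δ, θp Δ =
      (1 / 2) * ((1 - α Δ) / lam Δ + (1 - β Δ) * lam Δ + Real.sqrt (D Δ))) :
    (fun Δ => θp Δ -
        (1 + Δ * (μ * η₀ / (1 - ρ₀)) +
          Δ ^ 2 * ((μ ^ 2 / 2) * ((1 + ρ₀) / (1 - ρ₀) - 2 * η₀ ^ 2 * ρ₀ / (1 - ρ₀) ^ 3) +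
            μ * ((c₁ - c₀) / (1 - ρ₀) - η₀ * (c₀ + c₁) / (1 - ρ₀) ^ 2))))
      =o[nhdsWithin (0 : ℝ) (Set.Ioi 0)] fun Δ => Δ ^ 2 := by
  subst hρ₀ hη₀
  have hr : 0 < α₀ + β₀ := lt_of_le_of_ne (by positivity) (Ne.symm hne)
  have hS_exp := ((HasSecondOrderExpansion.quadratic (1 - α₀) (-c₀) 0).mul
      (HasSecondOrderExpansion.exp_mul μ)).add
    ((HasSecondOrderExpansion.quadratic (1 - β₀) (-c₁) 0).mul
      (HasSecondOrderExpansion.exp_mul (-μ)))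
  have hD_exp := (hS_exp.mul hS_exp).sub
    (HasSecondOrderExpansion.quadratic (4 * (1 - α₀ - β₀)) (-4 * (c₀ + c₁)) 0)
  have hθ := HasSecondOrderExpansion.const_mul (1 / 2) (hS_exp.add (hD_exp.sqrt hr (by ring)))
  refine IsLittleO.mono ?_ nhdsWithin_le_nhds
  change HasSecondOrderExpansion θp _ _ _
  convert hθ using 1
  · funext Δ
    simp only [hθp, hD, hα, hβ, hlam, div_eq_mul_inv, ← Real.exp_neg]
    ring_nf
  · ring
  all_goals rw [show 1 - (1 - α₀ - β₀) = α₀ + β₀ by ring]; field_simp; ring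

theorem stmt_19 (α₀ β₀ : ℝ) (hα₀ : 0 ≤ α₀) (hα₀1 : α₀ ≤ 1) (hβ₀ : 0 ≤ β₀) (hβ₀1 : β₀ ≤ 1)
    (hne : α₀ + β₀ ≠ 0)
    (ρ₀ η₀ : ℝ) (hρ₀ : ρ₀ = 1 - α₀ - β₀) (hη₀ : η₀ = β₀ - α₀)
    (c₀ c₁ μ : ℝ)
    (lam α β : ℝ → ℝ)
    (hlam : ∀ Δ, lam Δ = Real.exp (-μ * Δ))
    (hα : ∀ Δ, α Δ = α₀ + c₀ * Δ) (hβ : ∀ Δ, β Δ = β₀ + c₁ * Δ)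
    (D : ℝ → ℝ)
    (hD : ∀ Δ, D Δ = ((1 - α Δ) / lam Δ + (1 - β Δ) * lam Δ) ^ 2 - 4 * (1 - α Δ - β Δ))
    (θp : ℝ → ℝ)
    (hθp : ∀ Δ, θp Δ =
      (1 / 2) * ((1 - α Δ) / lam Δ + (1 - β Δ) * lam Δ + Real.sqrt (D Δ))) :
    (fun Δ => θp Δ -
        (1 + Δ * (μ * η₀ / (1 - ρ₀)) +
          Δ ^ 2 * ((μ ^ 2 / 2) * ((1 + ρ₀) / (1 - ρ₀) - 2 * η₀ ^ 2 * ρ₀ / (1 - ρ₀) ^ 3) +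
            μ * ((c₁ - c₀) / (1 - ρ₀) - η₀ * (c₀ + c₁) / (1 - ρ₀) ^ 2))))
      =o[nhdsWithin (0 : ℝ) (Set.Ioi 0)] fun Δ => Δ ^ 2 :=
  stmt_19_general α₀ β₀ hα₀ hβ₀ hne ρ₀ η₀ hρ₀ hη₀ c₀ c₁ μ lam α β hlam hα hβ D hD θp hθp
end
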